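/- The collection Q_round = {Prod(q) : q ∈ [0,1]^ℕ with q_{2n−1} ∈ {1/3, 2/3} and q_{2n} = 1 if q_{2n−1} = 2/3 and q_{2n} = 0 if q_{2n−1} = 1/3, for every n ≥ 1} is UME-learnable; indeed, there is a measurable single-sample estimator A_1 : {0,1}^ℕ → [0,1]^ℕ such that for every μ ∈ Q_round and X ∼ μ, ‖A_1(X) − Mean(μ)‖_∞ = 0 almost surely. -/

import Mathlib

open MeasureTheory Filter

/-- The sup-distance `‖p − q‖_∞ = ⨆ j, |p j − q j|` between two vectors. -/
noncomputable def supDist {ι : Type*} (p q : ι → ℝ) : ℝ := ⨆ j, |p j - q j|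

/-- The mean vector of a measure on `{0,1}^ι`: `Mean(μ)_j = μ {x | x j = 1}`. -/
noncomputable def meanVec {ι : Type*} (μ : Measure (ι → Bool)) : ι → ℝ :=
  fun j => (μ {x | x j = true}).toReal

/-- UME-learnability of a collection of distributions on `{0,1}^ι`. -/
def UMELearnable {ι : Type*} (Q : Set (Measure (ι → Bool))) : Prop :=
  ∃ A : (n : ℕ) → (Fin n → (ι → Bool)) → ι → ℝ,
    (∀ n, Measurable (A n)) ∧
    (∀ n S j, A n S j ∈ Set.Icc (0 : ℝ) 1) ∧
    ∀ μ ∈ Q,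
      Tendsto (fun n : ℕ =>
          ∫ S, supDist (A n S) (meanVec μ) ∂(Measure.pi fun _ : Fin n => μ))
        atTop (nhds 0)

/-- `μ = Prod q`: the product probability measure on `{0,1}^ι` with independent
coordinates, the `j`-th coordinate having mean `q j`. -/
def IsBernoulliProduct {ι : Type*} (q : ι → ℝ) (μ : Measure (ι → Bool)) : Prop :=
  IsProbabilityMeasure μ ∧
  ∀ (F : Finset ι) (f : ι → Bool),
    μ {x | ∀ j ∈ F, x j = f j} = ∏ j ∈ F, ENNReal.ofReal (if f j then q j else 1 - q j)

/-- The mean vectors of `Q_round` (coordinates indexed by `ℕ`, the coordinate `2*n`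
playing the role of the odd coordinate `2n−1` and `2*n+1` that of the even coordinate
`2n` of the paper): each odd coordinate is `1/3` or `2/3`, and the following even
coordinate is `1` if the preceding one is `2/3` and `0` if it is `1/3`. -/
def roundVectors : Set (ℕ → ℝ) :=
  {q | ∀ n : ℕ,
    (q (2 * n) = 1 / 3 ∨ q (2 * n) = 2 / 3) ∧
    (q (2 * n) = 2 / 3 → q (2 * n + 1) = 1) ∧
    (q (2 * n) = 1 / 3 → q (2 * n + 1) = 0)}

/-- The collection `Q_round` of product measures with mean vectors in `roundVectors`. -/
def Qround : Set (Measure (ℕ → Bool)) :=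
  {μ | ∃ q ∈ roundVectors, IsBernoulliProduct q μ}

/-!
For `μ ∈ Q_round` every coordinate `2n+1` has mean `0` or `1`, so it is almost surely constant,
and its value records whether coordinate `2n` has mean `1/3` or `2/3`. Hence a single sample
determines the whole mean vector almost surely, and an estimator that is almost surely exact on
one sample has zero expected error for every sample size `n ≥ 1`.
-/

lemma supDist_self {ι : Type*} (p : ι → ℝ) : supDist p p = 0 := by
  simp [supDist]

section SingleSample

variable {ι X : Type*}

noncomputable def firstSampleEstimator (A₁ : X → ι → ℝ) : (n : ℕ) → (Fin n → X) → ι → ℝ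
  | 0, _ => 0
  | _ + 1, S => A₁ (S 0)

lemma measurable_firstSampleEstimator [MeasurableSpace X] {A₁ : X → ι → ℝ} (hA₁ : Measurable A₁) (n : ℕ) :
    Measurable (firstSampleEstimator A₁ n) := by
  cases n with
  | zero => exact measurable_const
  | succ n => exact hA₁.comp (measurable_pi_apply 0)

lemma firstSampleEstimator_mem_Icc {A₁ : X → ι → ℝ} (hA₁ : ∀ x j, A₁ x j ∈ Set.Icc (0 : ℝ) 1)
    (n : ℕ) (S : Fin n → X) (j : ι) : firstSampleEstimator A₁ n S j ∈ Set.Icc (0 : ℝ) 1 := by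
  cases n with
  | zero => exact ⟨le_rfl, zero_le_one⟩
  | succ n => exact hA₁ (S 0) j

lemma integral_supDist_firstSampleEstimator_succ [MeasurableSpace X] {A₁ : X → ι → ℝ}
    {μ : Measure X} [SigmaFinite μ] {m : ι → ℝ} (h : ∀ᵐ x ∂μ, supDist (A₁ x) m = 0) (n : ℕ) :
    ∫ S, supDist (firstSampleEstimator A₁ (n + 1) S) m ∂(Measure.pi fun _ : Fin (n + 1) => μ)
      = 0 :=
  integral_eq_zero_of_ae <|
    (Measure.tendsto_eval_ae_ae (μ := fun _ : Fin (n + 1) => μ) (i := 0)).eventually h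

end SingleSample

theorem UMELearnable_of_ae_supDist_eq_zero {ι : Type*} {Q : Set (Measure (ι → Bool))}
    (hQ : ∀ μ ∈ Q, SigmaFinite μ) {A₁ : (ι → Bool) → ι → ℝ} (hA₁ : Measurable A₁)
    (hA₁_mem : ∀ x j, A₁ x j ∈ Set.Icc (0 : ℝ) 1)
    (hexact : ∀ μ ∈ Q, ∀ᵐ x ∂μ, supDist (A₁ x) (meanVec μ) = 0) :
    UMELearnable Q := by
  refine ⟨firstSampleEstimator A₁, measurable_firstSampleEstimator hA₁,
    firstSampleEstimator_mem_Icc hA₁_mem, fun μ hμ => ?_⟩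
  have := hQ μ hμ
  rw [← tendsto_add_atTop_iff_nat 1]
  simp only [integral_supDist_firstSampleEstimator_succ (hexact μ hμ), tendsto_const_nhds]

namespace IsBernoulliProduct

variable {ι : Type*} {q : ι → ℝ} {μ : Measure (ι → Bool)}

lemma measure_coord_eq (hμ : IsBernoulliProduct q μ) (j : ι) (b : Bool) :
    μ {x | x j = b} = ENNReal.ofReal (if b then q j else 1 - q j) := by
  simpa using hμ.2 {j} fun _ => b

lemma meanVec_eq (hμ : IsBernoulliProduct q μ) (hq : ∀ j, 0 ≤ q j) : meanVec μ = q := by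
  funext j
  simp [meanVec, hμ.measure_coord_eq, hq j]

lemma ae_coord_eq (hμ : IsBernoulliProduct q μ) {j : ι} {b : Bool}
    (hj : q j = if b then 1 else 0) : ∀ᵐ x ∂μ, x j = b := by
  have hcompl : {x : ι → Bool | ¬x j = b} = {x | x j = !b} := by
    ext x
    cases b <;> simp
  rw [ae_iff, hcompl, hμ.measure_coord_eq]
  cases b <;> simp [hj]

end IsBernoulliProduct

/-- The vector of `roundVectors` whose `n`-th pair of coordinates is `(2/3, 1)` if `b n` and
`(1/3, 0)` otherwise. -/
noncomputable def roundVec (b : ℕ → Bool) (j : ℕ) : ℝ :=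
  if b (j / 2) then (if j % 2 = 0 then 2 / 3 else 1) else (if j % 2 = 0 then 1 / 3 else 0)

@[simp]
lemma roundVec_two_mul (b : ℕ → Bool) (n : ℕ) :
    roundVec b (2 * n) = if b n then 2 / 3 else 1 / 3 := by
  simp [roundVec]

@[simp]
lemma roundVec_two_mul_add_one (b : ℕ → Bool) (n : ℕ) :
    roundVec b (2 * n + 1) = if b n then 1 else 0 := by
  have hdiv : (2 * n + 1) / 2 = n := by omega
  simp [roundVec, hdiv]

lemma roundVec_mem_Icc (b : ℕ → Bool) (j : ℕ) : roundVec b j ∈ Set.Icc (0 : ℝ) 1 := by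
  unfold roundVec
  split_ifs <;> norm_num

lemma exists_roundVec_eq {q : ℕ → ℝ} (hq : q ∈ roundVectors) : ∃ b, roundVec b = q := by
  refine ⟨fun n => decide (q (2 * n) = 2 / 3), funext fun j => ?_⟩
  obtain ⟨n, rfl | rfl⟩ := Nat.even_or_odd' j
  all_goals
    obtain ⟨h13 | h23, h1, h0⟩ := hq n
    · norm_num [h13, h0 h13]
    · norm_num [h23, h1 h23]

noncomputable def roundEstimator (x : ℕ → Bool) : ℕ → ℝ :=
  roundVec fun n => x (2 * n + 1)

lemma measurable_roundEstimator : Measurable roundEstimator :=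
  measurable_pi_lambda _ fun j =>
    (measurable_from_top : Measurable fun bit : Bool =>
      if bit then (if j % 2 = 0 then (2 / 3 : ℝ) else 1) else (if j % 2 = 0 then 1 / 3 else 0)).comp
      (measurable_pi_apply (2 * (j / 2) + 1))

lemma ae_roundEstimator_eq {b : ℕ → Bool} {μ : Measure (ℕ → Bool)}
    (hμ : IsBernoulliProduct (roundVec b) μ) : ∀ᵐ x ∂μ, roundEstimator x = roundVec b := by
  have hbits : ∀ᵐ x ∂μ, ∀ n, x (2 * n + 1) = b n :=
    ae_all_iff.2 fun n => hμ.ae_coord_eq (roundVec_two_mul_add_one b n)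
  filter_upwards [hbits] with x hx
  exact congrArg roundVec (funext hx)

lemma ae_supDist_roundEstimator_eq_zero {μ : Measure (ℕ → Bool)} (hμ : μ ∈ Qround) :
    ∀ᵐ x ∂μ, supDist (roundEstimator x) (meanVec μ) = 0 := by
  obtain ⟨q, hq, hμq⟩ := hμ
  obtain ⟨b, rfl⟩ := exists_roundVec_eq hq
  rw [hμq.meanVec_eq fun j => (roundVec_mem_Icc b j).1]
  filter_upwards [ae_roundEstimator_eq hμq] with x hx
  rw [hx, supDist_self]

/-- `Q_round` is UME-learnable; indeed there is a measurable single-sample estimator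
`A₁ : {0,1}^ℕ → [0,1]^ℕ` whose error `‖A₁ X − Mean μ‖_∞` is `0` almost surely for every
`μ ∈ Q_round`. -/
theorem Qround_UMELearnable :
    UMELearnable Qround ∧
    ∃ A₁ : (ℕ → Bool) → ℕ → ℝ,
      Measurable A₁ ∧ (∀ x j, A₁ x j ∈ Set.Icc (0 : ℝ) 1) ∧
      ∀ μ ∈ Qround, ∀ᵐ x ∂μ, supDist (A₁ x) (meanVec μ) = 0 := by
  have hσ : ∀ μ ∈ Qround, SigmaFinite μ := by
    rintro μ ⟨q, -, hμ⟩
    have := hμ.1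
    infer_instance
  have hA₁_mem : ∀ x j, roundEstimator x j ∈ Set.Icc (0 : ℝ) 1 :=
    fun x => roundVec_mem_Icc _
  exact ⟨UMELearnable_of_ae_supDist_eq_zero hσ measurable_roundEstimator hA₁_mem
      fun _ => ae_supDist_roundEstimator_eq_zero,
    roundEstimator, measurable_roundEstimator, hA₁_mem, fun _ => ae_supDist_roundEstimator_eq_zero⟩
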